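/- arXiv:0803.2373 — 4 statements merged into one kernel-verified Lean document; each statement's English description precedes it below -/
import Mathlib

section
/- There exist constants ε > 0 and C > 0 (depending only on r) such that: if the source condition x₀ − x† = F'(x†)*v holds for some v ∈ Y lying in the orthogonal complement of the kernel of F'(x†)*, and L‖v‖ ≤ ε, then for every integer k ≥ 0 the noise-free iterate x_k is well defined, lies in B_ρ(x†), and satisfies ‖x_k − x†‖ ≤ C α_k^{1/2} ‖v‖. -/
/-!
The error `e_k = x_k - x†` obeys `e_{k+1} = (α_k I + T_k*T_k)⁻¹ (T_k* R_k + α_k T†* v)` with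
`T_k = F'(x_k)`, `T† = F'(x†)` and a Taylor remainder `‖R_k‖ ≤ L ‖e_k‖²`. Writing
`T†* v = T_k* v + (T† - T_k)* v` and using `‖(αI + T*T)⁻¹ T*‖ ≤ 1 / (2√α)` and
`‖α (αI + T*T)⁻¹‖ ≤ 1` gives
`‖e_{k+1}‖ ≤ L ‖e_k‖² / (2√α_k) + √α_k ‖v‖ / 2 + L ‖e_k‖ ‖v‖`.
With `ε = 1 / (2√r + r)` the bound `‖e_k‖ ≤ √r √α_k ‖v‖` therefore propagates, because
`α_k ≤ r α_{k+1}`; the companion bound `‖e_k‖ ≤ 2 ‖e_0‖` keeps the iterates inside `B_ρ(x†)`.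
-/

open ContinuousLinearMap RealInnerProductSpace Filter

/-- `(α I + T*T)⁻¹` as an operator on `X` (via `Ring.inverse`; for `α > 0` the operator
`α I + T*T` is a unit, so this is the genuine inverse). -/
noncomputable def regInvX {X Y : Type*} [NormedAddCommGroup X] [InnerProductSpace ℝ X]
    [CompleteSpace X] [NormedAddCommGroup Y] [InnerProductSpace ℝ Y] [CompleteSpace Y]
    (α : ℝ) (T : X →L[ℝ] Y) : X →L[ℝ] X :=
  Ring.inverse (α • (1 : X →L[ℝ] X) + (adjoint T).comp T)

/-- `(α I + T T*)⁻¹` as an operator on `Y`. -/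
noncomputable def regInvY {X Y : Type*} [NormedAddCommGroup X] [InnerProductSpace ℝ X]
    [CompleteSpace X] [NormedAddCommGroup Y] [InnerProductSpace ℝ Y] [CompleteSpace Y]
    (α : ℝ) (T : X →L[ℝ] Y) : Y →L[ℝ] Y :=
  Ring.inverse (α • (1 : Y →L[ℝ] Y) + T.comp (adjoint T))

section RegularizedInverse

variable {X Y : Type*} [NormedAddCommGroup X] [InnerProductSpace ℝ X] [CompleteSpace X]
  [NormedAddCommGroup Y] [InnerProductSpace ℝ Y] [CompleteSpace Y]

lemma inner_regOp_apply_self (α : ℝ) (T : X →L[ℝ] Y) (x : X) :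
    ⟪(α • (1 : X →L[ℝ] X) + (adjoint T).comp T) x, x⟫ = α * ‖x‖ ^ 2 + ‖T x‖ ^ 2 := by
  rw [add_apply, inner_add_left, smul_apply, one_apply_eq_self, real_inner_smul_left,
    real_inner_self_eq_norm_sq, comp_apply, adjoint_inner_left, real_inner_self_eq_norm_sq]

lemma isUnit_regOp {α : ℝ} (hα : 0 < α) (T : X →L[ℝ] Y) :
    IsUnit (α • (1 : X →L[ℝ] X) + (adjoint T).comp T) := by
  refine isUnit_of_forall_le_norm_inner_map _ (c := ⟨α, hα.le⟩) hα fun x => ?_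
  rw [inner_regOp_apply_self, Real.norm_of_nonneg (by positivity)]
  change ‖x‖ ^ 2 * α ≤ _
  nlinarith [sq_nonneg ‖T x‖]

lemma regInvX_apply_regOp {α : ℝ} (hα : 0 < α) (T : X →L[ℝ] Y) (x : X) :
    regInvX α T ((α • (1 : X →L[ℝ] X) + (adjoint T).comp T) x) = x := by
  rw [regInvX, ← mul_apply_eq_comp, Ring.inverse_mul_cancel _ (isUnit_regOp hα T),
    one_apply_eq_self]

lemma regOp_apply_regInvX {α : ℝ} (hα : 0 < α) (T : X →L[ℝ] Y) (x : X) :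
    (α • (1 : X →L[ℝ] X) + (adjoint T).comp T) (regInvX α T x) = x := by
  rw [regInvX, ← mul_apply_eq_comp, Ring.mul_inverse_cancel _ (isUnit_regOp hα T),
    one_apply_eq_self]

lemma inner_regInvX_apply_self {α : ℝ} (hα : 0 < α) (T : X →L[ℝ] Y) (x : X) :
    α * ‖regInvX α T x‖ ^ 2 + ‖T (regInvX α T x)‖ ^ 2 = ⟪x, regInvX α T x⟫ := by
  rw [← inner_regOp_apply_self, regOp_apply_regInvX hα]

lemma mul_norm_regInvX_apply_le {α : ℝ} (hα : 0 < α) (T : X →L[ℝ] Y) (x : X) :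
    α * ‖regInvX α T x‖ ≤ ‖x‖ := by
  set u := regInvX α T x
  have h : α * ‖u‖ * ‖u‖ ≤ ‖x‖ * ‖u‖ := by
    nlinarith [inner_regInvX_apply_self hα T x, real_inner_le_norm x u, sq_nonneg ‖T u‖]
  rcases (norm_nonneg u).eq_or_lt with hu | hu
  · rw [← hu, mul_zero]; exact norm_nonneg x
  · exact le_of_mul_le_mul_right h hu

lemma norm_regInvX_adjoint_apply_le {α : ℝ} (hα : 0 < α) (T : X →L[ℝ] Y) (w : Y) :
    ‖regInvX α T (adjoint T w)‖ ≤ ‖w‖ / (2 * √α) := by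
  set u := regInvX α T (adjoint T w)
  have key : α * ‖u‖ ^ 2 + ‖T u‖ ^ 2 = ⟪w, T u⟫ := by
    rw [inner_regInvX_apply_self hα, adjoint_inner_left]
  -- `⟪w, T u⟫ ≤ ‖w‖ ‖T u‖ ≤ ‖w‖² / 4 + ‖T u‖²`
  have hsq : (2 * √α * ‖u‖) ^ 2 ≤ ‖w‖ ^ 2 := by
    nlinarith [real_inner_le_norm w (T u), sq_nonneg (‖w‖ - 2 * ‖T u‖), Real.sq_sqrt hα.le]
  rw [le_div_iff₀ (by positivity), mul_comm]
  exact (pow_le_pow_iff_left₀ (by positivity) (norm_nonneg w) two_ne_zero).mp hsq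

lemma sub_regInvX_adjoint_add_smul {α : ℝ} (hα : 0 < α) (T : X →L[ℝ] Y) (e u : X) (d : Y) :
    e - regInvX α T (adjoint T d + α • (e - u)) = regInvX α T (adjoint T (T e - d) + α • u) := by
  nth_rw 1 [← regInvX_apply_regOp hα T e]
  rw [← map_sub]
  congr 1
  simp only [add_apply, smul_apply, one_apply_eq_self, comp_apply, map_sub]
  module

lemma norm_regInvX_adjoint_add_smul_le {α : ℝ} (hα : 0 < α) (T : X →L[ℝ] Y) (w : Y) (u : X) :
    ‖regInvX α T (adjoint T w + α • u)‖ ≤ ‖w‖ / (2 * √α) + ‖u‖ := by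
  rw [map_add, map_smul]
  refine (norm_add_le _ _).trans (add_le_add (norm_regInvX_adjoint_apply_le hα T w) ?_)
  rw [norm_smul, Real.norm_of_nonneg hα.le]
  exact mul_norm_regInvX_apply_le hα T u

lemma norm_regInvX_adjoint_add_smul_adjoint_le {α : ℝ} (hα : 0 < α) (T T₀ : X →L[ℝ] Y)
    (w v : Y) :
    ‖regInvX α T (adjoint T w + α • adjoint T₀ v)‖
      ≤ ‖w‖ / (2 * √α) + √α * ‖v‖ / 2 + ‖T₀ - T‖ * ‖v‖ := by
  have hsplit : adjoint T w + α • adjoint T₀ v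
      = adjoint T (w + α • v) + α • adjoint (T₀ - T) v := by
    simp only [map_sub, sub_apply, map_add, map_smul]
    module
  have hsα : 0 < √α := Real.sqrt_pos.mpr hα
  have hfirst : ‖w + α • v‖ / (2 * √α) ≤ ‖w‖ / (2 * √α) + √α * ‖v‖ / 2 := by
    calc ‖w + α • v‖ / (2 * √α) ≤ (‖w‖ + α * ‖v‖) / (2 * √α) := by
          gcongr
          exact (norm_add_le _ _).trans_eq (by rw [norm_smul, Real.norm_of_nonneg hα.le])
      _ = ‖w‖ / (2 * √α) + √α * ‖v‖ / 2 := by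
          field_simp
          rw [Real.sq_sqrt hα.le]
          ring
  have hsecond : ‖adjoint (T₀ - T) v‖ ≤ ‖T₀ - T‖ * ‖v‖ :=
    (le_opNorm _ _).trans_eq (by rw [adjoint.norm_map])
  rw [hsplit]
  linarith [norm_regInvX_adjoint_add_smul_le hα T (w + α • v) (adjoint (T₀ - T) v)]

end RegularizedInverse

section Taylor

variable {E G : Type*} [NormedAddCommGroup E] [NormedSpace ℝ E] [NormedAddCommGroup G]
  [NormedSpace ℝ G]

lemma norm_image_sub_sub_fderiv_le_of_lipschitz {f : E → G} {f' : E → E →L[ℝ] G} {s : Set E}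
    {x y : E} {L : ℝ} (hs : Convex ℝ s) (hf : ∀ z ∈ s, HasFDerivAt f (f' z) z)
    (hL : 0 ≤ L) (hlip : ∀ z ∈ s, ‖f' z - f' x‖ ≤ L * ‖z - x‖) (hx : x ∈ s) (hy : y ∈ s) :
    ‖f y - f x - f' x (y - x)‖ ≤ L * ‖y - x‖ ^ 2 := by
  have hseg : segment ℝ x y ⊆ s := hs.segment_subset hx hy
  calc ‖f y - f x - f' x (y - x)‖ ≤ L * ‖y - x‖ * ‖y - x‖ :=
        (convex_segment x y).norm_image_sub_le_of_norm_hasFDerivWithin_le'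
          (fun z hz => (hf z (hseg hz)).hasFDerivWithinAt)
          (fun z hz => (hlip z (hseg hz)).trans
            (mul_le_mul_of_nonneg_left (norm_sub_le_of_mem_segment hz) hL))
          (left_mem_segment ℝ x y) (right_mem_segment ℝ x y)
    _ = L * ‖y - x‖ ^ 2 := by ring

end Taylor

lemma quadratic_error_bound_le {L n s E q : ℝ} (hL : 0 ≤ L) (hn : 0 ≤ n) (hs : 0 < s)
    (hE₀ : 0 ≤ E) (hE : E ≤ q * s * n) (hLn : L * n * (2 * q + q ^ 2) ≤ 1) :
    L * E ^ 2 / (2 * s) + s * n / 2 + L * E * n ≤ s * n := by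
  have hsq : E ^ 2 ≤ q ^ 2 * s * n * (s * n) := by nlinarith
  have hquad : L * E ^ 2 / (2 * s) ≤ L * n * q ^ 2 * (s * n) / 2 := by
    rw [div_le_iff₀ (by positivity)]
    nlinarith [mul_le_mul_of_nonneg_left hsq hL]
  have hlin : L * E * n ≤ L * n * q * (s * n) := by
    nlinarith [mul_le_mul_of_nonneg_left hE (mul_nonneg hL hn)]
  nlinarith [mul_le_mul_of_nonneg_right hLn (by positivity : 0 ≤ s * n)]

lemma quadratic_error_bound_le_of_le_two_mul {L n s E q e₀ : ℝ} (hL : 0 ≤ L) (hs : 0 < s)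
    (hE₀ : 0 ≤ E) (hE : E ≤ q * s * n) (hEe₀ : E ≤ 2 * e₀) (hLn : L * n * q ≤ 1) :
    L * E ^ 2 / (2 * s) ≤ e₀ := by
  rw [div_le_iff₀ (by positivity)]
  have hsq : E ^ 2 ≤ q * s * n * (2 * e₀) := by
    rw [sq]; exact mul_le_mul hE hEe₀ hE₀ (hE₀.trans hE)
  have he₀ : 0 ≤ e₀ := by linarith
  nlinarith [mul_le_mul_of_nonneg_left hsq hL, mul_le_mul_of_nonneg_right hLn
    (by positivity : 0 ≤ s * e₀)]

section GaussNewton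

variable {X Y : Type*} [NormedAddCommGroup X] [InnerProductSpace ℝ X] [CompleteSpace X]
  [NormedAddCommGroup Y] [InnerProductSpace ℝ Y] [CompleteSpace Y]

lemma norm_gaussNewton_step_sub_le {F : X → Y} {F' : X → X →L[ℝ] Y} {s : Set X} {xdag x x₀ : X}
    {v : Y} {α L : ℝ} (hα : 0 < α) (hL : 0 ≤ L) (hs : Convex ℝ s)
    (hder : ∀ z ∈ s, HasFDerivAt F (F' z) z)
    (hLip : ∀ z ∈ s, ∀ z' ∈ s, ‖F' z - F' z'‖ ≤ L * ‖z - z'‖) (hxdag : xdag ∈ s) (hx : x ∈ s)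
    (hsrc : x₀ - xdag = adjoint (F' xdag) v) :
    let step := x - regInvX α (F' x) (adjoint (F' x) (F x - F xdag) + α • (x - x₀))
    ‖step - xdag‖ ≤ L * ‖x - xdag‖ ^ 2 / (2 * √α) + √α * ‖v‖ / 2 + L * ‖x - xdag‖ * ‖v‖ ∧
      ‖step - xdag‖ ≤ L * ‖x - xdag‖ ^ 2 / (2 * √α) + ‖x₀ - xdag‖ := by
  intro step
  set T := F' x
  set e := x - xdag
  have herror : step - xdag
      = regInvX α T (adjoint T (T e - (F x - F xdag)) + α • (x₀ - xdag)) := by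
    rw [sub_right_comm, ← sub_sub_sub_cancel_right x x₀ xdag]
    exact sub_regInvX_adjoint_add_smul hα T e _ _
  have hremainder : ‖T e - (F x - F xdag)‖ ≤ L * ‖e‖ ^ 2 := by
    calc ‖T e - (F x - F xdag)‖ = ‖F xdag - F x - T (xdag - x)‖ := by
          rw [show xdag - x = -e from (neg_sub x xdag).symm, map_neg]
          congr 1
          abel
      _ ≤ L * ‖xdag - x‖ ^ 2 := norm_image_sub_sub_fderiv_le_of_lipschitz hs hder hL
          (fun z hz => hLip z hz x hx) hx hxdag
      _ = L * ‖e‖ ^ 2 := by rw [norm_sub_rev]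
  have hderiv : ‖F' xdag - T‖ ≤ L * ‖e‖ := by
    simpa only [norm_sub_rev xdag x] using hLip xdag hxdag x hx
  constructor
  · rw [herror, hsrc]
    refine (norm_regInvX_adjoint_add_smul_adjoint_le hα T (F' xdag) _ v).trans ?_
    gcongr
  · rw [herror]
    refine (norm_regInvX_adjoint_add_smul_le hα T _ _).trans ?_
    gcongr

lemma norm_gaussNewton_iterate_sub_le {F : X → Y} {F' : X → X →L[ℝ] Y} {xdag x₀ : X} {v : Y}
    {α : ℕ → ℝ} {xf : ℕ → X} {r L ρ : ℝ} (hr : 1 ≤ r) (hL : 0 ≤ L)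
    (hρ : 2 * ‖x₀ - xdag‖ ≤ ρ)
    (hder : ∀ x ∈ Metric.closedBall xdag ρ, HasFDerivAt F (F' x) x)
    (hLip : ∀ x ∈ Metric.closedBall xdag ρ, ∀ z ∈ Metric.closedBall xdag ρ,
      ‖F' x - F' z‖ ≤ L * ‖x - z‖)
    (hscale : ‖F' xdag‖ ≤ √(α 0)) (hα : ∀ k, 0 < α k) (hαr : ∀ k, α k ≤ r * α (k + 1))
    (hsrc : x₀ - xdag = adjoint (F' xdag) v) (hLv : L * ‖v‖ * (2 * √r + r) ≤ 1)
    (hxf0 : xf 0 = x₀)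
    (hrec : ∀ k, xf (k + 1) = xf k - regInvX (α k) (F' (xf k))
      (adjoint (F' (xf k)) (F (xf k) - F xdag) + α k • (xf k - x₀))) (k : ℕ) :
    ‖xf k - xdag‖ ≤ √r * √(α k) * ‖v‖ ∧ ‖xf k - xdag‖ ≤ 2 * ‖x₀ - xdag‖ := by
  have hsr : 1 ≤ √r := Real.one_le_sqrt.mpr hr
  have hLv' : L * ‖v‖ * (2 * √r + √r ^ 2) ≤ 1 := by rwa [Real.sq_sqrt (by linarith)]
  have hxdag : xdag ∈ Metric.closedBall xdag ρ :=
    Metric.mem_closedBall_self ((mul_nonneg zero_le_two (norm_nonneg _)).trans hρ)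
  induction k with
  | zero =>
    have he₀ : ‖x₀ - xdag‖ ≤ √(α 0) * ‖v‖ := by
      rw [hsrc]
      exact (le_opNorm _ _).trans (by rw [adjoint.norm_map]; gcongr)
    rw [hxf0]
    constructor <;> nlinarith [norm_nonneg (x₀ - xdag), norm_nonneg v, Real.sqrt_nonneg (α 0)]
  | succ k ih =>
    obtain ⟨ih_rate, ih_ball⟩ := ih
    have hx : xf k ∈ Metric.closedBall xdag ρ := by
      rw [Metric.mem_closedBall, dist_eq_norm]
      exact ih_ball.trans hρ
    have hsα : 0 < √(α k) := Real.sqrt_pos.mpr (hα k)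
    have hsα_succ : √(α k) ≤ √r * √(α (k + 1)) := by
      rw [← Real.sqrt_mul (by linarith)]
      exact Real.sqrt_le_sqrt (hαr k)
    obtain ⟨hstep_rate, hstep_ball⟩ := norm_gaussNewton_step_sub_le (hα k) hL
      (convex_closedBall xdag ρ) hder hLip hxdag hx hsrc
    rw [← hrec k] at hstep_rate hstep_ball
    constructor
    · calc ‖xf (k + 1) - xdag‖ ≤ √(α k) * ‖v‖ :=
            hstep_rate.trans (quadratic_error_bound_le hL (norm_nonneg v) hsα (norm_nonneg _)
              ih_rate hLv')
        _ ≤ √r * √(α (k + 1)) * ‖v‖ := by gcongr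
    · have hLn : L * ‖v‖ * √r ≤ 1 := by nlinarith [mul_nonneg hL (norm_nonneg v)]
      linarith [quadratic_error_bound_le_of_le_two_mul hL hsα (norm_nonneg _) ih_rate ih_ball hLn]

end GaussNewton

/-- Lemma 3.1, first part: the noise-free iterates `x_k` stay in the ball `B_ρ(x†)` and
satisfy `‖x_k - x†‖ ≤ C α_k^{1/2} ‖v‖`; the constants `ε`, `C` depend only on `r`. -/
theorem stmt7 {X Y : Type*} [NormedAddCommGroup X] [InnerProductSpace ℝ X] [CompleteSpace X]
    [NormedAddCommGroup Y] [InnerProductSpace ℝ Y] [CompleteSpace Y]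
    (r : ℝ) (hr : 1 < r) :
    ∃ ε > 0, ∃ C > 0,
      ∀ (ρ L : ℝ) (α : ℕ → ℝ) (F : X → Y) (F' : X → X →L[ℝ] Y) (xdag x₀ : X) (y : Y),
      F xdag = y →
      4 * ‖x₀ - xdag‖ < ρ →
      (∀ x ∈ Metric.closedBall xdag ρ, HasFDerivAt F (F' x) x) →
      (∀ x ∈ Metric.closedBall xdag ρ, ∀ z ∈ Metric.closedBall xdag ρ,
        ‖F' x - F' z‖ ≤ L * ‖x - z‖) →
      (∀ x ∈ Metric.closedBall xdag ρ, ‖F' x‖ ≤ Real.sqrt (α 0)) →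
      (∀ k, 0 < α k) →
      (∀ k, 1 ≤ α k / α (k + 1) ∧ α k / α (k + 1) ≤ r) →
      Tendsto α atTop (nhds 0) →
      ∀ v : Y, v ∈ (LinearMap.ker (adjoint (F' xdag) : Y →ₗ[ℝ] X))ᗮ →
      x₀ - xdag = adjoint (F' xdag) v → L * ‖v‖ ≤ ε →
      ∀ xf : ℕ → X, xf 0 = x₀ →
      (∀ k, xf (k + 1) = xf k - regInvX (α k) (F' (xf k))
        ((adjoint (F' (xf k))) (F (xf k) - y) + α k • (xf k - x₀))) →
      ∀ k : ℕ, xf k ∈ Metric.closedBall xdag ρ ∧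
        ‖xf k - xdag‖ ≤ C * Real.sqrt (α k) * ‖v‖ := by
  refine ⟨1 / (2 * √r + r), by positivity, √r, Real.sqrt_pos.mpr (by linarith), ?_⟩
  intro ρ L α F F' xdag x₀ y hy hρ hder hLip hscale hα hαr _ v _ hsrc hLv xf hxf0 hrec k
  subst hy
  have hLip' : ∀ x ∈ Metric.closedBall xdag ρ, ∀ z ∈ Metric.closedBall xdag ρ,
      ‖F' x - F' z‖ ≤ max L 0 * ‖x - z‖ := fun x hx z hz =>
    (hLip x hx z hz).trans (by gcongr; exact le_max_left L 0)
  have hLv' : max L 0 * ‖v‖ * (2 * √r + r) ≤ 1 := by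
    rw [← le_div_iff₀ (by positivity), max_mul_of_nonneg _ _ (norm_nonneg v), zero_mul]
    exact max_le hLv (by positivity)
  have hαr' (k : ℕ) : α k ≤ r * α (k + 1) := (div_le_iff₀ (hα (k + 1))).mp (hαr k).2
  have hxdag : xdag ∈ Metric.closedBall xdag ρ :=
    Metric.mem_closedBall_self (by linarith [norm_nonneg (x₀ - xdag)])
  obtain ⟨hrate, hball⟩ := norm_gaussNewton_iterate_sub_le hr.le (le_max_right L 0)
    (by linarith [norm_nonneg (x₀ - xdag)]) hder hLip' (hscale xdag hxdag) hα hαr' hsrc hLv'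
    hxf0 hrec k
  refine ⟨?_, hrate⟩
  rw [Metric.mem_closedBall, dist_eq_norm]
  linarith [norm_nonneg (x₀ - xdag)]
end

section
/- There exist constants ε > 0 and c₁, c₂, C > 0 (depending only on r) such that: if the source condition x₀ − x† = F'(x†)*v holds for some v ∈ Y lying in the orthogonal complement of the kernel of F'(x†)*, and L‖v‖ ≤ ε, then the noise-free iterates satisfy c₁ β_k ≤ ‖x_k − x†‖ ≤ c₂ β_k for all k ≥ 0, where β_k := ‖α_k (α_k I + F'(x†)*F'(x†))^{-1}(x₀ − x†)‖; moreover ‖x_{k−1} − x†‖ ≤ C ‖x_k − x†‖ for all k ≥ 1, and ‖x_l − x†‖ ≤ C ‖x_k − x†‖ for all integers 0 ≤ k ≤ l. -/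
/-! Write `R_α(S) = (αI + S*S)⁻¹`, `T = F'(x†)`, `e_k = x_k - x†` and `w_k = α_k R_{α_k}(T) e₀`,
so that `β_k = ‖w_k‖`. Replacing `F(x_k) - y` by its linearization at `x_k` and comparing
`R_{α_k}(F'(x_k))` with `R_{α_k}(T)` through `T*T - S*S = S*(T - S) + (T* - S*)T` gives
`‖e_{k+1} - w_k‖ ≤ (5/4) L‖e_k‖‖v‖ + L‖e_k‖² / (2√α_k)`. The source condition gives
`β_k ≤ √α_k ‖v‖ / 2`, so for `L‖v‖ ≤ 1/(40r²)` this is at most `β_k / 2` as long as `‖e_k‖ ≤ 4rβ_k`.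
By the resolvent identity `β_{k+1} ≤ β_k ≤ 2rβ_{k+1}`, and the scaling condition gives
`‖e₀‖ ≤ 2β₀`, so induction yields `β_k / 2 ≤ ‖e_k‖ ≤ 4rβ_k`, and the remaining estimates follow
with `C = 16r²`. -/

open ContinuousLinearMap RealInnerProductSpace Filter

section RegularizedInverse

variable {X Y : Type*} [NormedAddCommGroup X] [InnerProductSpace ℝ X] [CompleteSpace X]
  [NormedAddCommGroup Y] [InnerProductSpace ℝ Y] [CompleteSpace Y] {α : ℝ} (T : X →L[ℝ] Y)

noncomputable def regOpX (α : ℝ) (T : X →L[ℝ] Y) : X →L[ℝ] X :=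
  α • (1 : X →L[ℝ] X) + (adjoint T).comp T

lemma regOpX_apply (x : X) : regOpX α T x = α • x + adjoint T (T x) := rfl

lemma inner_regOpX_self (x : X) : ⟪regOpX α T x, x⟫ = α * ‖x‖ ^ 2 + ‖T x‖ ^ 2 := by
  rw [regOpX_apply, inner_add_left, real_inner_smul_left, adjoint_inner_left,
    real_inner_self_eq_norm_sq, real_inner_self_eq_norm_sq]

lemma isUnit_regOpX (hα : 0 < α) : IsUnit (regOpX α T) := by
  refine isUnit_of_forall_le_norm_inner_map _ (c := ⟨α, hα.le⟩) hα fun x => ?_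
  calc ‖x‖ ^ 2 * α ≤ ⟪regOpX α T x, x⟫ := by
        rw [inner_regOpX_self]; nlinarith [sq_nonneg ‖T x‖]
    _ ≤ ‖⟪regOpX α T x, x⟫‖ := le_abs_self _

lemma regOpX_regInvX (hα : 0 < α) (x : X) : regOpX α T (regInvX α T x) = x :=
  DFunLike.congr_fun (Ring.mul_inverse_cancel _ (isUnit_regOpX T hα)) x

lemma regInvX_regOpX (hα : 0 < α) (x : X) : regInvX α T (regOpX α T x) = x :=
  DFunLike.congr_fun (Ring.inverse_mul_cancel _ (isUnit_regOpX T hα)) x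

lemma norm_smul_regInvX_le (hα : 0 < α) (x : X) : ‖α • regInvX α T x‖ ≤ ‖x‖ := by
  set u := regInvX α T x
  have h : α * ‖u‖ ^ 2 + ‖T u‖ ^ 2 ≤ ‖x‖ * ‖u‖ := by
    rw [← inner_regOpX_self, ← regOpX_regInvX T hα x]
    exact real_inner_le_norm _ _
  rw [norm_smul, Real.norm_of_nonneg hα.le]
  rcases (norm_nonneg u).eq_or_lt with hu | hu
  · rw [← hu, mul_zero]; exact norm_nonneg x
  · nlinarith [sq_nonneg ‖T u‖]

lemma le_two_mul_norm_smul_regInvX (hα : 0 < α) (hT : ‖T‖ ≤ √α) (x : X) :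
    ‖x‖ ≤ 2 * ‖α • regInvX α T x‖ := by
  set u := regInvX α T x
  have hTT : ‖T‖ * ‖T‖ ≤ α := by
    simpa only [Real.mul_self_sqrt hα.le] using mul_self_le_mul_self (norm_nonneg T) hT
  calc ‖x‖ = ‖α • u + adjoint T (T u)‖ := by rw [← regOpX_apply, regOpX_regInvX T hα]
    _ ≤ α * ‖u‖ + ‖T‖ * (‖T‖ * ‖u‖) := by
        refine (norm_add_le _ _).trans (add_le_add (le_of_eq ?_) ?_)
        · rw [norm_smul, Real.norm_of_nonneg hα.le]
        · refine (le_opNorm _ _).trans ?_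
          rw [LinearIsometryEquiv.norm_map]
          gcongr
          exact le_opNorm _ _
    _ ≤ 2 * (α * ‖u‖) := by nlinarith [norm_nonneg u]
    _ = 2 * ‖α • u‖ := by rw [norm_smul, Real.norm_of_nonneg hα.le]

lemma mul_norm_sq_add_norm_sq_regInvX_adjoint_le (hα : 0 < α) (y : Y) :
    α * ‖regInvX α T (adjoint T y)‖ ^ 2 + ‖T (regInvX α T (adjoint T y))‖ ^ 2 ≤
      ‖y‖ * ‖T (regInvX α T (adjoint T y))‖ := by
  rw [← inner_regOpX_self, regOpX_regInvX T hα, adjoint_inner_left]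
  exact real_inner_le_norm _ _

lemma norm_regInvX_adjoint_le (hα : 0 < α) (y : Y) :
    ‖regInvX α T (adjoint T y)‖ ≤ ‖y‖ / (2 * √α) := by
  have h := mul_norm_sq_add_norm_sq_regInvX_adjoint_le T hα y
  rw [le_div_iff₀ (by positivity), ← pow_le_pow_iff_left₀ (by positivity) (norm_nonneg y)
    two_ne_zero, mul_pow, mul_pow, Real.sq_sqrt hα.le]
  nlinarith [sq_nonneg (‖y‖ - 2 * ‖T (regInvX α T (adjoint T y))‖)]

lemma norm_apply_regInvX_adjoint_le (hα : 0 < α) (y : Y) :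
    ‖T (regInvX α T (adjoint T y))‖ ≤ ‖y‖ := by
  have h := mul_norm_sq_add_norm_sq_regInvX_adjoint_le T hα y
  rcases (norm_nonneg (T (regInvX α T (adjoint T y)))).eq_or_lt with hu | hu
  · rw [← hu]; exact norm_nonneg y
  · nlinarith [mul_nonneg hα.le (sq_nonneg ‖regInvX α T (adjoint T y)‖)]

lemma regInvX_eq_add_smul_regInvX_regInvX {α' : ℝ} (hα : 0 < α) (hα' : 0 < α') (w : X) :
    regInvX α' T w = regInvX α T w + (α - α') • regInvX α' T (regInvX α T w) := by
  conv_lhs => rw [← regOpX_regInvX T hα w]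
  rw [show regOpX α T (regInvX α T w) = regOpX α' T (regInvX α T w) + (α - α') • regInvX α T w by
      simp only [regOpX_apply]; module,
    map_add, map_smul, regInvX_regOpX T hα']

lemma mul_norm_smul_regInvX_le {α' : ℝ} (hα : 0 < α) (hα' : 0 < α') (w : X) :
    α * ‖α' • regInvX α' T w‖ ≤ (α' + |α - α'|) * ‖α • regInvX α T w‖ := by
  set u := regInvX α T w
  have h := norm_smul_regInvX_le T hα' u
  calc α * ‖α' • regInvX α' T w‖ = α * ‖α' • u + (α - α') • (α' • regInvX α' T u)‖ := by
        rw [regInvX_eq_add_smul_regInvX_regInvX T hα hα', smul_add, smul_comm α' (α - α')]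
    _ ≤ α * (α' * ‖u‖ + |α - α'| * ‖u‖) := by
        gcongr
        refine (norm_add_le _ _).trans (add_le_add (le_of_eq ?_) ?_)
        · rw [norm_smul, Real.norm_of_nonneg hα'.le]
        · rw [norm_smul, Real.norm_eq_abs]
          gcongr
    _ = (α' + |α - α'|) * ‖α • u‖ := by
        rw [norm_smul, Real.norm_of_nonneg hα.le]; ring

lemma norm_smul_regInvX_le_of_le {α' : ℝ} (hα' : 0 < α') (hle : α' ≤ α) (w : X) :
    ‖α' • regInvX α' T w‖ ≤ ‖α • regInvX α T w‖ := by
  have hα := hα'.trans_le hle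
  have h := mul_norm_smul_regInvX_le T hα hα' w
  rw [abs_of_nonneg (sub_nonneg.mpr hle), add_sub_cancel] at h
  exact le_of_mul_le_mul_left h hα

lemma mul_norm_smul_regInvX_le_of_le {α' : ℝ} (hα' : 0 < α') (hle : α' ≤ α) (w : X) :
    α' * ‖α • regInvX α T w‖ ≤ 2 * α * ‖α' • regInvX α' T w‖ := by
  have h := mul_norm_smul_regInvX_le T hα' (hα'.trans_le hle) w
  rw [abs_of_nonpos (sub_nonpos.mpr hle)] at h
  exact h.trans (by gcongr; linarith)

lemma norm_smul_regInvX_adjoint_le (hα : 0 < α) (y : Y) :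
    ‖α • regInvX α T (adjoint T y)‖ ≤ √α * ‖y‖ / 2 := by
  rw [norm_smul, Real.norm_of_nonneg hα.le]
  calc α * ‖regInvX α T (adjoint T y)‖ ≤ √α * √α * (‖y‖ / (2 * √α)) := by
        rw [Real.mul_self_sqrt hα.le]; gcongr; exact norm_regInvX_adjoint_le T hα y
    _ = √α * ‖y‖ / 2 := by field_simp

lemma sub_regInvX_sub_smul_regInvX_eq (hα : 0 < α) (S : X →L[ℝ] Y) (e e₀ : X) (d : Y) :
    e - regInvX α S (adjoint S d + α • (e - e₀)) - α • regInvX α T e₀ =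
      α • regInvX α S (adjoint S ((T - S) (regInvX α T e₀))) +
      α • regInvX α S ((adjoint T - adjoint S) (T (regInvX α T e₀))) +
      regInvX α S (adjoint S (S e - d)) := by
  set u := regInvX α T e₀
  have h : adjoint S d + α • (e - e₀) = regOpX α S (e - α • u) -
      (adjoint S (S e - d) + α • adjoint S ((T - S) u) + α • (adjoint T - adjoint S) (T u)) := by
    rw [← regOpX_regInvX T hα e₀]
    simp only [regOpX_apply, map_sub, map_smul, sub_apply]
    module
  rw [h, map_sub, regInvX_regOpX S hα, map_add, map_add, map_smul, map_smul]
  module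

lemma norm_sub_regInvX_sub_smul_regInvX_adjoint_le (hα : 0 < α) {S : X →L[ℝ] Y} {e : X}
    {d v : Y} {δ η : ℝ} (hTS : ‖T - S‖ ≤ δ) (hd : ‖S e - d‖ ≤ η) :
    ‖e - regInvX α S (adjoint S d + α • (e - adjoint T v)) - α • regInvX α T (adjoint T v)‖ ≤
      5 / 4 * δ * ‖v‖ + η / (2 * √α) := by
  set u := regInvX α T (adjoint T v)
  have hu := norm_regInvX_adjoint_le T hα v
  have h₁ : ‖α • regInvX α S (adjoint S ((T - S) u))‖ ≤ δ * ‖v‖ / 4 :=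
    calc _ ≤ √α * ‖(T - S) u‖ / 2 := norm_smul_regInvX_adjoint_le S hα _
      _ ≤ √α * (δ * (‖v‖ / (2 * √α))) / 2 := by
          gcongr; exact le_of_opNorm_le_of_le _ hTS hu
      _ = δ * ‖v‖ / 4 := by field_simp; ring
  have h₂ : ‖α • regInvX α S ((adjoint T - adjoint S) (T u))‖ ≤ δ * ‖v‖ :=
    calc _ ≤ ‖(adjoint T - adjoint S) (T u)‖ := norm_smul_regInvX_le S hα _
      _ ≤ δ * ‖v‖ := by
          refine le_of_opNorm_le_of_le _ ?_ (norm_apply_regInvX_adjoint_le T hα v)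
          rwa [← map_sub, LinearIsometryEquiv.norm_map]
  have h₃ : ‖regInvX α S (adjoint S (S e - d))‖ ≤ η / (2 * √α) :=
    (norm_regInvX_adjoint_le S hα _).trans (by gcongr)
  rw [sub_regInvX_sub_smul_regInvX_eq T hα]
  linarith [norm_add₃_le (E := X)
    (a := α • regInvX α S (adjoint S ((T - S) u)))
    (b := α • regInvX α S ((adjoint T - adjoint S) (T u)))
    (c := regInvX α S (adjoint S (S e - d)))]

end RegularizedInverse

lemma Convex.norm_sub_sub_fderiv_le_of_lipschitz {E G : Type*} [NormedAddCommGroup E]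
    [NormedSpace ℝ E] [NormedAddCommGroup G] [NormedSpace ℝ G] {f : E → G} {f' : E → E →L[ℝ] G}
    {s : Set E} {L : ℝ} {x z : E} (hs : Convex ℝ s) (hf : ∀ x ∈ s, HasFDerivAt f (f' x) x)
    (hf' : ∀ x ∈ s, ∀ z ∈ s, ‖f' x - f' z‖ ≤ L * ‖x - z‖) (hx : x ∈ s) (hz : z ∈ s) :
    ‖f z - f x - f' x (z - x)‖ ≤ L * ‖z - x‖ ^ 2 := by
  rcases eq_or_ne z x with rfl | hzx
  · simp
  have hL : 0 ≤ L := nonneg_of_mul_nonneg_left ((norm_nonneg _).trans (hf' z hz x hx))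
    (norm_pos_iff.mpr (sub_ne_zero.mpr hzx))
  have hseg := hs.segment_subset hx hz
  have h := (convex_segment x z).norm_image_sub_le_of_norm_hasFDerivWithin_le' (φ := f' x)
    (fun w hw => (hf w (hseg hw)).hasFDerivWithinAt)
    (fun w hw => (hf' w (hseg hw) x hx).trans
      (mul_le_mul_of_nonneg_left (norm_sub_le_of_mem_segment hw) hL))
    (left_mem_segment ℝ x z) (right_mem_segment ℝ x z)
  rwa [mul_assoc, ← sq] at h

section IteratedGaussNewton

variable {X Y : Type*} [NormedAddCommGroup X] [InnerProductSpace ℝ X] [CompleteSpace X]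
  [NormedAddCommGroup Y] [InnerProductSpace ℝ Y] [CompleteSpace Y]

noncomputable def irgnStep (F : X → Y) (F' : X → X →L[ℝ] Y) (y : Y) (x₀ : X) (α : ℝ) (x : X) : X :=
  x - regInvX α (F' x) (adjoint (F' x) (F x - y) + α • (x - x₀))

variable {F : X → Y} {F' : X → X →L[ℝ] Y} {s : Set X} {L α : ℝ} {x xdag x₀ : X} {y v : Y}

lemma norm_irgnStep_sub_sub_le (hα : 0 < α) (hs : Convex ℝ s)
    (hF : ∀ x ∈ s, HasFDerivAt F (F' x) x)
    (hF' : ∀ x ∈ s, ∀ z ∈ s, ‖F' x - F' z‖ ≤ L * ‖x - z‖) (hx : x ∈ s) (hxdag : xdag ∈ s)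
    (hy : F xdag = y) (hsrc : x₀ - xdag = adjoint (F' xdag) v) :
    ‖irgnStep F F' y x₀ α x - xdag - α • regInvX α (F' xdag) (x₀ - xdag)‖ ≤
      5 / 4 * (L * ‖x - xdag‖) * ‖v‖ + L * ‖x - xdag‖ ^ 2 / (2 * √α) := by
  have hTS : ‖F' xdag - F' x‖ ≤ L * ‖x - xdag‖ := by
    rw [norm_sub_rev x]; exact hF' xdag hxdag x hx
  have hd : ‖F' x (x - xdag) - (F x - y)‖ ≤ L * ‖x - xdag‖ ^ 2 := by
    calc _ = ‖F xdag - F x - F' x (xdag - x)‖ := by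
          rw [← hy, ← neg_sub x xdag, map_neg]; congr 1; abel
      _ ≤ _ := by
          rw [norm_sub_rev x]; exact hs.norm_sub_sub_fderiv_le_of_lipschitz hF hF' hx hxdag
  have h := norm_sub_regInvX_sub_smul_regInvX_adjoint_le (F' xdag) hα (e := x - xdag) (v := v)
    hTS hd
  rwa [irgnStep, hsrc, sub_right_comm x, show x - x₀ = x - xdag - adjoint (F' xdag) v by
    rw [← hsrc, sub_sub_sub_cancel_right]]

lemma norm_irgnStep_sub_sub_le_half {r : ℝ} (hr : 1 ≤ r) (hα : 0 < α) (hs : Convex ℝ s)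
    (hF : ∀ x ∈ s, HasFDerivAt F (F' x) x)
    (hF' : ∀ x ∈ s, ∀ z ∈ s, ‖F' x - F' z‖ ≤ L * ‖x - z‖) (hx : x ∈ s) (hxdag : xdag ∈ s)
    (hy : F xdag = y) (hsrc : x₀ - xdag = adjoint (F' xdag) v) (hLv : L * ‖v‖ ≤ 1 / (40 * r ^ 2))
    (hxr : ‖x - xdag‖ ≤ 4 * r * ‖α • regInvX α (F' xdag) (x₀ - xdag)‖) :
    ‖irgnStep F F' y x₀ α x - xdag - α • regInvX α (F' xdag) (x₀ - xdag)‖ ≤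
      ‖α • regInvX α (F' xdag) (x₀ - xdag)‖ / 2 := by
  set e := ‖x - xdag‖
  set β := ‖α • regInvX α (F' xdag) (x₀ - xdag)‖
  have hβ : β ≤ √α * ‖v‖ / 2 := by
    simp only [β, hsrc]; exact norm_smul_regInvX_adjoint_le _ hα v
  have hLe : 0 ≤ L * e := (norm_nonneg _).trans (hF' x hx xdag hxdag)
  have hquad : L * e ^ 2 / (2 * √α) ≤ r * (L * e) * ‖v‖ := by
    rw [div_le_iff₀ (by positivity)]
    have he : e ≤ 2 * r * √α * ‖v‖ := by nlinarith
    nlinarith [mul_le_mul_of_nonneg_left he hLe]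
  calc _ ≤ 5 / 4 * (L * e) * ‖v‖ + L * e ^ 2 / (2 * √α) :=
        norm_irgnStep_sub_sub_le hα hs hF hF' hx hxdag hy hsrc
    _ ≤ (5 / 4 + r) * e * (L * ‖v‖) := by nlinarith
    _ ≤ (5 / 4 + r) * e * (1 / (40 * r ^ 2)) := by gcongr
    _ ≤ (5 / 4 + r) * (4 * r * β) * (1 / (40 * r ^ 2)) := by gcongr
    _ ≤ β / 2 := by
        field_simp
        nlinarith [norm_nonneg (α • regInvX α (F' xdag) (x₀ - xdag))]

end IteratedGaussNewton

lemma half_norm_le_and_norm_le_of_step {E : Type*} [SeminormedAddCommGroup E] {e w : ℕ → E}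
    {r : ℝ} (hr : 1 ≤ r) (h₀ : ‖e 0‖ ≤ 2 * ‖w 0‖) (hw : ∀ k, ‖w k‖ ≤ ‖e 0‖)
    (hw_succ_le : ∀ k, ‖w (k + 1)‖ ≤ ‖w k‖) (hw_le_succ : ∀ k, ‖w k‖ ≤ 2 * r * ‖w (k + 1)‖)
    (hstep : ∀ k, ‖e k‖ ≤ 4 * r * ‖w k‖ → ‖e k‖ ≤ 2 * ‖e 0‖ → ‖e (k + 1) - w k‖ ≤ ‖w k‖ / 2) :
    ∀ k, ‖w k‖ / 2 ≤ ‖e k‖ ∧ ‖e k‖ ≤ 4 * r * ‖w k‖ := by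
  have upper : ∀ k, ‖e k‖ ≤ 4 * r * ‖w k‖ ∧ ‖e k‖ ≤ 2 * ‖e 0‖ := by
    intro k
    induction k with
    | zero => constructor <;> nlinarith [norm_nonneg (w 0), norm_nonneg (e 0)]
    | succ k ih =>
      have h := hstep k ih.1 ih.2
      have h' := norm_le_norm_add_norm_sub' (e (k + 1)) (w k)
      constructor
      · nlinarith [hw_le_succ k, mul_nonneg (by linarith : (0 : ℝ) ≤ r) (norm_nonneg (w (k + 1))),
          norm_nonneg (w k)]
      · linarith [hw k, norm_nonneg (e 0)]
  refine fun k => ⟨?_, (upper k).1⟩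
  cases k with
  | zero => linarith [hw 0, norm_nonneg (w 0)]
  | succ k =>
    have h := hstep k (upper k).1 (upper k).2
    linarith [norm_le_norm_add_norm_sub (e (k + 1)) (w k), hw_succ_le k]

/-- Lemma 3.1, second part: with `β_k := ‖α_k (α_k I + F'(x†)*F'(x†))⁻¹ (x₀ - x†)‖` one has
`‖x_k - x†‖ ≈ β_k`, `‖x_{k-1} - x†‖ ≲ ‖x_k - x†‖` and `‖x_l - x†‖ ≲ ‖x_k - x†‖` for `k ≤ l`,
for the noise-free iterates `x_k`; the constants depend only on `r`. -/
theorem stmt8 {X Y : Type*} [NormedAddCommGroup X] [InnerProductSpace ℝ X] [CompleteSpace X]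
    [NormedAddCommGroup Y] [InnerProductSpace ℝ Y] [CompleteSpace Y]
    (r : ℝ) (hr : 1 < r) :
    ∃ ε > 0, ∃ c₁ > 0, ∃ c₂ > 0, ∃ C > 0,
      ∀ (ρ L : ℝ) (α : ℕ → ℝ) (F : X → Y) (F' : X → X →L[ℝ] Y) (xdag x₀ : X) (y : Y),
      F xdag = y →
      4 * ‖x₀ - xdag‖ < ρ →
      (∀ x ∈ Metric.closedBall xdag ρ, HasFDerivAt F (F' x) x) →
      (∀ x ∈ Metric.closedBall xdag ρ, ∀ z ∈ Metric.closedBall xdag ρ,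
        ‖F' x - F' z‖ ≤ L * ‖x - z‖) →
      (∀ x ∈ Metric.closedBall xdag ρ, ‖F' x‖ ≤ Real.sqrt (α 0)) →
      (∀ k, 0 < α k) →
      (∀ k, 1 ≤ α k / α (k + 1) ∧ α k / α (k + 1) ≤ r) →
      Tendsto α atTop (nhds 0) →
      ∀ v : Y, v ∈ (LinearMap.ker (adjoint (F' xdag) : Y →ₗ[ℝ] X))ᗮ →
      x₀ - xdag = adjoint (F' xdag) v → L * ‖v‖ ≤ ε →
      ∀ xf : ℕ → X, xf 0 = x₀ →
      (∀ k, xf (k + 1) = xf k - regInvX (α k) (F' (xf k))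
        ((adjoint (F' (xf k))) (F (xf k) - y) + α k • (xf k - x₀))) →
      (∀ k : ℕ,
          c₁ * ‖α k • regInvX (α k) (F' xdag) (x₀ - xdag)‖ ≤ ‖xf k - xdag‖ ∧
          ‖xf k - xdag‖ ≤ c₂ * ‖α k • regInvX (α k) (F' xdag) (x₀ - xdag)‖) ∧
      (∀ k : ℕ, 1 ≤ k → ‖xf (k - 1) - xdag‖ ≤ C * ‖xf k - xdag‖) ∧
      (∀ k l : ℕ, k ≤ l → ‖xf l - xdag‖ ≤ C * ‖xf k - xdag‖) := by
  have hr₀ : 0 < r := by linarith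
  refine ⟨1 / (40 * r ^ 2), by positivity, 1 / 2, by norm_num, 4 * r, by positivity,
    16 * r ^ 2, by positivity, ?_⟩
  intro ρ L α F F' xdag x₀ y hy hρ hF hF' hF'_le hα hα_ratio _ v _ hsrc hLv xf hxf₀ hxf
  set T := F' xdag
  set w : ℕ → X := fun k => α k • regInvX (α k) T (x₀ - xdag)
  have hα_succ_le (k : ℕ) : α (k + 1) ≤ α k := (one_le_div (hα (k + 1))).mp (hα_ratio k).1
  have hw_succ_le (k : ℕ) : ‖w (k + 1)‖ ≤ ‖w k‖ :=
    norm_smul_regInvX_le_of_le T (hα (k + 1)) (hα_succ_le k) _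
  have hw_le_succ (k : ℕ) : ‖w k‖ ≤ 2 * r * ‖w (k + 1)‖ := by
    have h := mul_norm_smul_regInvX_le_of_le T (hα (k + 1)) (hα_succ_le k) (x₀ - xdag)
    have hαr := (div_le_iff₀ (hα (k + 1))).mp (hα_ratio k).2
    refine le_of_mul_le_mul_left (h.trans ?_) (hα (k + 1))
    nlinarith [norm_nonneg (w (k + 1))]
  have hxdag : xdag ∈ Metric.closedBall xdag ρ :=
    Metric.mem_closedBall_self (by linarith [norm_nonneg (x₀ - xdag)])
  have hbounds := half_norm_le_and_norm_le_of_step (e := fun k => xf k - xdag) (w := w) hr.le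
    (by rw [hxf₀]; exact le_two_mul_norm_smul_regInvX T (hα 0) (hF'_le xdag hxdag) _)
    (fun k => by rw [hxf₀]; exact norm_smul_regInvX_le T (hα k) _) hw_succ_le hw_le_succ
    (fun k h₁ h₂ => by
      rw [hxf k]
      refine norm_irgnStep_sub_sub_le_half hr.le (hα k) (convex_closedBall _ _) hF hF' ?_ hxdag
        hy hsrc hLv h₁
      rw [hxf₀] at h₂
      rw [Metric.mem_closedBall, dist_eq_norm]
      linarith [norm_nonneg (x₀ - xdag)])
  refine ⟨fun k => ⟨by linarith [(hbounds k).1], (hbounds k).2⟩, fun k hk => ?_, fun k l hkl => ?_⟩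
  · obtain ⟨k, rfl⟩ := Nat.exists_eq_add_of_le' hk
    rw [Nat.add_sub_cancel]
    calc ‖xf k - xdag‖ ≤ 4 * r * ‖w k‖ := (hbounds k).2
      _ ≤ 4 * r * (2 * r * (2 * ‖xf (k + 1) - xdag‖)) := by
          gcongr; exact (hw_le_succ k).trans (by gcongr; linarith [(hbounds (k + 1)).1])
      _ = 16 * r ^ 2 * ‖xf (k + 1) - xdag‖ := by ring
  · calc ‖xf l - xdag‖ ≤ 4 * r * ‖w l‖ := (hbounds l).2
      _ ≤ 4 * r * (2 * ‖xf k - xdag‖) := by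
          gcongr
          linarith [antitone_nat_of_succ_le (f := (‖w ·‖)) hw_succ_le hkl, (hbounds k).1]
      _ ≤ 16 * r ^ 2 * ‖xf k - xdag‖ := by
          nlinarith [mul_le_mul_of_nonneg_right (by nlinarith : 8 * r ≤ 16 * r ^ 2)
            (norm_nonneg (xf k - xdag))]
end

section
/- Let X be a real Hilbert space, A a bounded nonnegative selfadjoint operator on X, and x ∈ X. Then for all real numbers 0 < α ≤ α' one has ‖α (α I + A)^{-1} x‖ ≤ ‖α' (α' I + A)^{-1} x‖ and ‖α' (α' I + A)^{-1} x‖ ≤ (α'/α) ‖α (α I + A)^{-1} x‖. -/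
open ContinuousLinearMap RealInnerProductSpace

/-!
Both resolvents `(α + A)⁻¹` and `(α' + A)⁻¹` commute, so with `w = (α + A)⁻¹ (α' + A)⁻¹ x` the two
vectors compared are `α (α' w + A w)` and `α' (α w + A w)`. Since `⟪A w, w⟫ ≥ 0`, the squared norm
of `s v + u` is increasing in `s ≥ 0` whenever `⟪v, u⟫ ≥ 0`; this gives both inequalities.
-/

section

variable {X : Type*} [NormedAddCommGroup X] [InnerProductSpace ℝ X]

theorem norm_smul_add_le_norm_smul_add {u v : X} (huv : 0 ≤ ⟪v, u⟫) {s t : ℝ} (hs : 0 ≤ s)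
    (hst : s ≤ t) : ‖s • v + u‖ ≤ ‖t • v + u‖ := by
  have hsq : ∀ r : ℝ, ‖r • v + u‖ ^ 2 = r ^ 2 * ‖v‖ ^ 2 + 2 * r * ⟪v, u⟫ + ‖u‖ ^ 2 := fun r => by
    rw [norm_add_sq_real, norm_smul, real_inner_smul_left, Real.norm_eq_abs, mul_pow, sq_abs]
    ring
  refine (pow_le_pow_iff_left₀ (norm_nonneg _) (norm_nonneg _) two_ne_zero).mp ?_
  rw [hsq, hsq]
  gcongr

theorem isCoercive_innerSL_comp_smul_one_add {A : X →L[ℝ] X} (hA : ∀ u, 0 ≤ ⟪A u, u⟫) {β : ℝ}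
    (hβ : 0 < β) : IsCoercive ((innerSL ℝ).comp (β • 1 + A)) := by
  refine ⟨β, hβ, fun u => ?_⟩
  simp only [comp_apply, innerSL_apply_apply, add_apply, smul_apply, one_apply_eq_self,
    inner_add_left, real_inner_smul_left, real_inner_self_eq_norm_mul_norm]
  linarith [hA u]

theorem isUnit_of_isCoercive_innerSL_comp [CompleteSpace X] {T : X →L[ℝ] X}
    (hT : IsCoercive ((innerSL ℝ).comp T)) : IsUnit T := by
  have hsharp : InnerProductSpace.continuousLinearMapOfBilin ((innerSL ℝ).comp T) = T :=
    ext fun _ => (InnerProductSpace.unique_continuousLinearMapOfBilin _ fun _ => rfl).symm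
  rw [isUnit_iff_bijective, ← hsharp]
  exact hT.continuousLinearEquivOfBilin.bijective

theorem commute_smul_one_add_smul_one_add (A : X →L[ℝ] X) (α α' : ℝ) :
    Commute (α • 1 + A) (α' • 1 + A) :=
  ((Commute.one_left _).smul_left α).add_left
    (((Commute.one_right A).smul_right α').add_right (Commute.refl A))

end

theorem stmt14_general {X : Type*} [NormedAddCommGroup X] [InnerProductSpace ℝ X] [CompleteSpace X]
    (A : X →L[ℝ] X) (hApos : ∀ u : X, 0 ≤ ⟪A u, u⟫)
    (x : X) (α α' : ℝ) (hα : 0 < α) (hαα' : α ≤ α') :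
    ‖α • Ring.inverse (α • (1 : X →L[ℝ] X) + A) x‖ ≤
      ‖α' • Ring.inverse (α' • (1 : X →L[ℝ] X) + A) x‖ ∧
    ‖α' • Ring.inverse (α' • (1 : X →L[ℝ] X) + A) x‖ ≤
      (α' / α) * ‖α • Ring.inverse (α • (1 : X →L[ℝ] X) + A) x‖ := by
  have hα' : 0 < α' := hα.trans_le hαα'
  have hunit : ∀ {β : ℝ}, 0 < β → IsUnit (β • (1 : X →L[ℝ] X) + A) := fun hβ =>
    isUnit_of_isCoercive_innerSL_comp (isCoercive_innerSL_comp_smul_one_add hApos hβ)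
  set w := Ring.inverse (α • (1 : X →L[ℝ] X) + A) (Ring.inverse (α' • (1 : X →L[ℝ] X) + A) x)
  have hres : Ring.inverse (α • (1 : X →L[ℝ] X) + A) x = α' • w + A w := by
    rw [← Ring.mul_inverse_cancel_left _ (Ring.inverse (α • 1 + A)) (hunit hα'),
      ← (commute_smul_one_add_smul_one_add A α α').ringInverse_ringInverse.eq]
    rfl
  have hres' : Ring.inverse (α' • (1 : X →L[ℝ] X) + A) x = α • w + A w := by
    rw [← Ring.mul_inverse_cancel_left _ (Ring.inverse (α' • 1 + A)) (hunit hα)]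
    rfl
  have hw : 0 ≤ ⟪A w, w⟫ := hApos w
  rw [hres, hres']
  constructor
  · rw [smul_add, smul_add, smul_smul, smul_smul, mul_comm α' α, add_comm, add_comm ((α * α') • w)]
    exact norm_smul_add_le_norm_smul_add
      (by rw [real_inner_smul_right]; exact mul_nonneg (mul_pos hα hα').le hw) hα.le hαα'
  · rw [norm_smul, norm_smul, Real.norm_of_nonneg hα.le, Real.norm_of_nonneg hα'.le,
      ← mul_assoc, div_mul_cancel₀ _ hα.ne']
    gcongr
    exact norm_smul_add_le_norm_smul_add (by rwa [real_inner_comm]) hα.le hαα'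

/-- For a bounded nonnegative selfadjoint operator `A` and `0 < α ≤ α'`, the quantity
`β(α) = ‖α (α I + A)⁻¹ x‖` is monotone: `β(α) ≤ β(α')` and `β(α') ≤ (α'/α) β(α)`. -/
theorem stmt14 {X : Type*} [NormedAddCommGroup X] [InnerProductSpace ℝ X] [CompleteSpace X]
    (A : X →L[ℝ] X) (hA : IsSelfAdjoint A) (hApos : ∀ u : X, 0 ≤ ⟪A u, u⟫)
    (x : X) (α α' : ℝ) (hα : 0 < α) (hαα' : α ≤ α') :
    ‖α • Ring.inverse (α • (1 : X →L[ℝ] X) + A) x‖ ≤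
      ‖α' • Ring.inverse (α' • (1 : X →L[ℝ] X) + A) x‖ ∧
    ‖α' • Ring.inverse (α' • (1 : X →L[ℝ] X) + A) x‖ ≤
      (α' / α) * ‖α • Ring.inverse (α • (1 : X →L[ℝ] X) + A) x‖ :=
  stmt14_general A hApos x α α' hα hαα'
end

section
/- Let X and Y be real Hilbert spaces, let T₀, T : X → Y be bounded linear operators with ‖T₀ − T‖ ≤ ε, let v ∈ Y, and set e₀ := T₀* v. Then for every α > 0, with β := ‖α (α I + T*T)^{-1} e₀‖ and γ := ⟨α³ (α I + T T*)^{-3} T e₀, T e₀⟩^{1/2}, one has β² ≤ γ ‖v‖ + β ε ‖v‖; consequently β ≤ (γ ‖v‖)^{1/2} + ε ‖v‖. -/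
open ContinuousLinearMap RealInnerProductSpace Filter

/-! With `P = α (α I + T*T)⁻¹` and `Q = α (α I + T T*)⁻¹`, both positive contractions with
`T P = Q T`, one has `β² = ⟪P e₀, P e₀⟫ = ⟪v, T₀ P² e₀⟫`. Splitting `T₀ = T + (T₀ - T)`, the first
part is `⟪v, Q² T e₀⟫ ≤ γ ‖v‖` by the Cauchy–Schwarz inequality for the positive form `⟪Q ·, ·⟫`,
and the second is at most `‖v‖ ε ‖P² e₀‖ ≤ β ε ‖v‖`. Solving the quadratic inequality
`β² ≤ γ ‖v‖ + β ε ‖v‖` for `β` gives the second claim. -/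

lemma le_sqrt_add_of_sq_le_add_mul {a b x : ℝ} (hb : 0 ≤ b)
    (h : x ^ 2 ≤ a + x * b) : x ≤ √a + b := by
  rcases le_or_gt x b with hxb | hxb
  · linarith [Real.sqrt_nonneg a]
  · have : x - b ≤ √a := (le_abs_self _).trans (Real.abs_le_sqrt (by nlinarith))
    linarith

namespace ContinuousLinearMap

variable {E : Type*} [NormedAddCommGroup E] [InnerProductSpace ℝ E]

lemma IsPositive.inner_sq_le {S : E →L[ℝ] E} (hS : S.IsPositive) (u w : E) :
    ⟪S u, w⟫ ^ 2 ≤ ⟪S u, u⟫ * ⟪S w, w⟫ := by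
  have quadratic_nonneg (t : ℝ) :
      0 ≤ ⟪S w, w⟫ * (t * t) + 2 * ⟪S u, w⟫ * t + ⟪S u, u⟫ := by
    have hwu : ⟪S w, u⟫ = ⟪S u, w⟫ := by
      rw [hS.inner_left_eq_inner_right, real_inner_comm]
    have := hS.inner_nonneg_left (u + t • w)
    simp only [map_add, map_smul, inner_add_left, inner_add_right, real_inner_smul_left,
      real_inner_smul_right, hwu] at this
    linarith
  have := discrim_le_zero quadratic_nonneg
  rw [discrim] at this
  linarith

lemma IsPositive.inner_sq_apply_le {P : E →L[ℝ] E} (hP : P.IsPositive) (hP1 : ‖P‖ ≤ 1)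
    (x v : E) : ⟪v, (P ^ 2) x⟫ ≤ √⟪(P ^ 3) x, x⟫ * ‖v‖ := by
  have hcube : ⟪(P ^ 3) x, x⟫ = ⟪P (P x), P x⟫ := by
    rw [pow_succ', mul_apply_eq_comp, hP.inner_left_eq_inner_right, sq, mul_apply_eq_comp]
  have hv : ⟪P v, v⟫ ≤ ‖v‖ ^ 2 :=
    calc ⟪P v, v⟫ ≤ ‖P v‖ * ‖v‖ := real_inner_le_norm _ _
      _ ≤ ‖v‖ * ‖v‖ := by gcongr; simpa using P.le_of_opNorm_le hP1 v
      _ = ‖v‖ ^ 2 := by ring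
  have hcs : ⟪v, (P ^ 2) x⟫ ^ 2 ≤ ⟪(P ^ 3) x, x⟫ * ‖v‖ ^ 2 := by
    rw [hcube, sq P, mul_apply_eq_comp, real_inner_comm]
    exact (hP.inner_sq_le (P x) v).trans
      (mul_le_mul_of_nonneg_left hv (hP.inner_nonneg_left _))
  calc ⟪v, (P ^ 2) x⟫ ≤ √(⟪(P ^ 3) x, x⟫ * ‖v‖ ^ 2) :=
        (le_abs_self _).trans (Real.abs_le_sqrt hcs)
    _ = √⟪(P ^ 3) x, x⟫ * ‖v‖ := by
        rw [Real.sqrt_mul' _ (by positivity), Real.sqrt_sq (norm_nonneg v)]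

lemma apply_ringInverse_apply {A : E →L[ℝ] E} (hA : IsUnit A) (y : E) :
    A (Ring.inverse A y) = y :=
  DFunLike.congr_fun (Ring.mul_inverse_cancel A hA) y

section Coercive

variable [CompleteSpace E] {A : E →L[ℝ] E} {α : ℝ}

lemma isUnit_of_coercive (hα : 0 < α) (hA : ∀ x, α * ‖x‖ ^ 2 ≤ ⟪A x, x⟫) : IsUnit A := by
  refine isUnit_of_forall_le_norm_inner_map A (c := α.toNNReal) (by simpa using hα) fun x => ?_
  rw [Real.coe_toNNReal α hα.le, Real.norm_eq_abs]
  exact (mul_comm (‖x‖ ^ 2) α ▸ hA x).trans (le_abs_self _)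

lemma norm_smul_ringInverse_le_one_of_coercive (hα : 0 < α)
    (hA : ∀ x, α * ‖x‖ ^ 2 ≤ ⟪A x, x⟫) : ‖α • Ring.inverse A‖ ≤ 1 := by
  refine opNorm_le_bound _ zero_le_one fun y => ?_
  set z := Ring.inverse A y
  have hz : A z = y := apply_ringInverse_apply (isUnit_of_coercive hα hA) y
  have : α * ‖z‖ * ‖z‖ ≤ ‖y‖ * ‖z‖ :=
    calc α * ‖z‖ * ‖z‖ = α * ‖z‖ ^ 2 := by ring
      _ ≤ ⟪A z, z⟫ := hA z
      _ ≤ ‖y‖ * ‖z‖ := hz ▸ real_inner_le_norm _ _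
  rw [smul_apply, norm_smul, Real.norm_of_nonneg hα.le, one_mul]
  nlinarith [norm_nonneg z, norm_nonneg y]

lemma isPositive_smul_ringInverse_of_coercive (hα : 0 < α)
    (hA : ∀ x, α * ‖x‖ ^ 2 ≤ ⟪A x, x⟫) (hA' : IsSelfAdjoint A) :
    (α • Ring.inverse A).IsPositive := by
  refine ((isPositive_iff' _).2 ⟨hA'.ringInverse, fun y => ?_⟩).smul_of_nonneg hα.le
  set z := Ring.inverse A y
  have hz : A z = y := apply_ringInverse_apply (isUnit_of_coercive hα hA) y
  calc 0 ≤ α * ‖z‖ ^ 2 := by positivity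
    _ ≤ ⟪A z, z⟫ := hA z
    _ = ⟪z, y⟫ := by rw [hz, real_inner_comm]

end Coercive

variable {F : Type*} [NormedAddCommGroup F] [InnerProductSpace ℝ F]

lemma comp_ringInverse_eq_of_comp_eq {A : E →L[ℝ] E} {B : F →L[ℝ] F} (hA : IsUnit A)
    (hB : IsUnit B) {T : E →L[ℝ] F} (h : B ∘L T = T ∘L A) :
    T ∘L Ring.inverse A = Ring.inverse B ∘L T := by
  ext x
  calc T (Ring.inverse A x) = Ring.inverse B (B (T (Ring.inverse A x))) :=
        (DFunLike.congr_fun (Ring.inverse_mul_cancel B hB) _).symm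
    _ = Ring.inverse B (T x) := by
        rw [← comp_apply B T, h, comp_apply, apply_ringInverse_apply hA]

end ContinuousLinearMap

section Regularization

variable {X Y : Type*} [NormedAddCommGroup X] [InnerProductSpace ℝ X] [CompleteSpace X]
  [NormedAddCommGroup Y] [InnerProductSpace ℝ Y] [CompleteSpace Y] {α : ℝ} (T : X →L[ℝ] Y)

lemma inner_regularized_apply_self (x : X) :
    ⟪(α • (1 : X →L[ℝ] X) + (adjoint T).comp T) x, x⟫ = α * ‖x‖ ^ 2 + ‖T x‖ ^ 2 := by
  simp only [add_apply, smul_apply, one_apply_eq_self, comp_apply, inner_add_left,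
    real_inner_smul_left, real_inner_self_eq_norm_sq, adjoint_inner_left]

lemma mul_norm_sq_le_inner_regularized_apply (x : X) :
    α * ‖x‖ ^ 2 ≤ ⟪(α • (1 : X →L[ℝ] X) + (adjoint T).comp T) x, x⟫ := by
  rw [inner_regularized_apply_self]
  exact le_add_of_nonneg_right (sq_nonneg _)

lemma isSelfAdjoint_regularized : IsSelfAdjoint (α • (1 : X →L[ℝ] X) + (adjoint T).comp T) :=
  ((IsSelfAdjoint.all α).smul (IsSelfAdjoint.one _)).add
    (isPositive_adjoint_comp_self T).isSelfAdjoint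

lemma isUnit_regularized (hα : 0 < α) :
    IsUnit (α • (1 : X →L[ℝ] X) + (adjoint T).comp T) :=
  isUnit_of_coercive hα (mul_norm_sq_le_inner_regularized_apply T)

lemma isPositive_smul_regInvX (hα : 0 < α) : (α • regInvX α T).IsPositive :=
  isPositive_smul_ringInverse_of_coercive hα (mul_norm_sq_le_inner_regularized_apply T)
    (isSelfAdjoint_regularized T)

lemma norm_smul_regInvX_le_one (hα : 0 < α) : ‖α • regInvX α T‖ ≤ 1 :=
  norm_smul_ringInverse_le_one_of_coercive hα (mul_norm_sq_le_inner_regularized_apply T)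

lemma regInvY_eq_regInvX_adjoint : regInvY α T = regInvX α (adjoint T) := by
  rw [regInvX, regInvY, adjoint_adjoint]

lemma comp_regInvX (hα : 0 < α) : T ∘L regInvX α T = regInvY α T ∘L T := by
  refine comp_ringInverse_eq_of_comp_eq (isUnit_regularized T hα)
    (by simpa only [adjoint_adjoint] using isUnit_regularized (adjoint T) hα) ?_
  ext x
  simp only [comp_apply, add_apply, smul_apply, one_apply_eq_self, map_add, map_smul]

end Regularization

/-- The key estimate on `β = ‖α (α I + T*T)⁻¹ e₀‖` with `e₀ = T₀* v` and `‖T₀ - T‖ ≤ ε`: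
with `γ = ⟨α³ (α I + T T*)⁻³ T e₀, T e₀⟩^{1/2}` one has `β² ≤ γ ‖v‖ + β ε ‖v‖`, and
consequently `β ≤ (γ ‖v‖)^{1/2} + ε ‖v‖` (cf. the estimate (2.12)). -/
theorem stmt18 {X Y : Type*} [NormedAddCommGroup X] [InnerProductSpace ℝ X] [CompleteSpace X]
    [NormedAddCommGroup Y] [InnerProductSpace ℝ Y] [CompleteSpace Y]
    (T₀ T : X →L[ℝ] Y) (ε : ℝ) (hT : ‖T₀ - T‖ ≤ ε) (v : Y) (α : ℝ) (hα : 0 < α)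
    (e₀ : X) (he₀ : e₀ = adjoint T₀ v)
    (β γ : ℝ)
    (hβ : β = ‖α • regInvX α T e₀‖)
    (hγ : γ = Real.sqrt ⟪(α ^ 3 • regInvY α T ^ 3) (T e₀), T e₀⟫) :
    β ^ 2 ≤ γ * ‖v‖ + β * ε * ‖v‖ ∧ β ≤ Real.sqrt (γ * ‖v‖) + ε * ‖v‖ := by
  set P := α • regInvX α T
  set Q := α • regInvY α T
  have hP : P.IsPositive := isPositive_smul_regInvX T hα
  have hQ : Q.IsPositive := by
    simpa only [Q, regInvY_eq_regInvX_adjoint] using isPositive_smul_regInvX (adjoint T) hα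
  have hQ1 : ‖Q‖ ≤ 1 := by
    simpa only [Q, regInvY_eq_regInvX_adjoint] using norm_smul_regInvX_le_one (adjoint T) hα
  have hTP (x : X) : T (P x) = Q (T x) := by
    simp only [P, Q, smul_apply, map_smul, ← comp_apply T (regInvX α T), comp_regInvX T hα,
      comp_apply]
  have hβ' : β = ‖P e₀‖ := hβ
  have hγ' : γ = √⟪(Q ^ 3) (T e₀), T e₀⟫ := by rw [hγ, smul_pow]
  have hsplit : β ^ 2 = ⟪v, T (P (P e₀))⟫ + ⟪v, (T₀ - T) (P (P e₀))⟫ := by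
    rw [hβ', ← real_inner_self_eq_norm_sq, hP.inner_left_eq_inner_right, he₀, adjoint_inner_left,
      ← inner_add_right, ← add_apply, add_sub_cancel]
  have h₁ : ⟪v, T (P (P e₀))⟫ ≤ γ * ‖v‖ := by
    rw [hTP, hTP, ← mul_apply_eq_comp, ← sq, hγ']
    exact hQ.inner_sq_apply_le hQ1 _ _
  have hε : 0 ≤ ε := (norm_nonneg _).trans hT
  have hPP : ‖P (P e₀)‖ ≤ β := by
    simpa only [one_mul, hβ'] using le_of_opNorm_le P (norm_smul_regInvX_le_one T hα) (P e₀)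
  have h₂ : ⟪v, (T₀ - T) (P (P e₀))⟫ ≤ β * ε * ‖v‖ :=
    calc ⟪v, (T₀ - T) (P (P e₀))⟫ ≤ ‖v‖ * ‖(T₀ - T) (P (P e₀))‖ := real_inner_le_norm _ _
      _ ≤ ‖v‖ * (ε * β) := by gcongr; exact (le_of_opNorm_le _ hT _).trans (by gcongr)
      _ = β * ε * ‖v‖ := by ring
  have hmain : β ^ 2 ≤ γ * ‖v‖ + β * ε * ‖v‖ := by linarith
  exact ⟨hmain, le_sqrt_add_of_sq_le_add_mul (by positivity) (by linarith)⟩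
end
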